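/- arXiv:1303.5202 — 2 statements merged into one kernel-verified Lean document; each statement's English description precedes it below -/
import Mathlib

section
/- Let φ be a norm on ℝ² and let E ⊆ ℝ² be a convex open set satisfying the rW_φ-condition for some r > 0. Then E = E^r, i.e. E coincides with the union of all Wulff balls of radius r contained in E. -/
open MeasureTheory Set ENNReal Filter

noncomputable section

/-- `φ` is a norm on `ℝⁿ` (represented as `Fin n → ℝ`). -/
structure IsNorm {n : ℕ} (φ : (Fin n → ℝ) → ℝ) : Prop where
  nonneg : ∀ x, 0 ≤ φ x
  eq_zero_iff : ∀ x, φ x = 0 ↔ x = 0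
  smul_eq : ∀ (a : ℝ) (x : Fin n → ℝ), φ (a • x) = |a| * φ x
  add_le : ∀ x y, φ (x + y) ≤ φ x + φ y

/-- The divergence of a vector field `η : ℝⁿ → ℝⁿ`. -/
def diverg {n : ℕ} (η : (Fin n → ℝ) → (Fin n → ℝ)) (x : Fin n → ℝ) : ℝ :=
  ∑ i, fderiv ℝ η x (Pi.single i 1) i

/-- The anisotropic total variation `∫ φ*(Du)` of `u : ℝⁿ → ℝ`:
`sup { ∫ u div η dx : η ∈ C¹_c(ℝⁿ;ℝⁿ), φ(η(x)) ≤ 1 ∀ x }`, as an extended real. -/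
def anisoTV {n : ℕ} (φ : (Fin n → ℝ) → ℝ) (u : (Fin n → ℝ) → ℝ) : ℝ≥0∞ :=
  ⨆ η ∈ {η : (Fin n → ℝ) → (Fin n → ℝ) |
      ContDiff ℝ 1 η ∧ HasCompactSupport η ∧ ∀ x, φ (η x) ≤ 1},
    ENNReal.ofReal (∫ x, u x * diverg η x)

/-- `u ∈ BV(ℝⁿ)` (with respect to the anisotropic total variation). -/
def IsBV {n : ℕ} (φ : (Fin n → ℝ) → ℝ) (u : (Fin n → ℝ) → ℝ) : Prop :=
  Integrable u volume ∧ anisoTV φ u ≠ ⊤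

/-- `u` is admissible for problem (1): `u ∈ BV(ℝⁿ)`, `u = 0` a.e. outside `Ω`,
`u` is a.e. `ℕ`-valued, and `∫_Ω u = m`. -/
def Admissible {n : ℕ} (φ : (Fin n → ℝ) → ℝ) (Ω : Set (Fin n → ℝ)) (m : ℝ)
    (u : (Fin n → ℝ) → ℝ) : Prop :=
  IsBV φ u ∧ (∀ᵐ x ∂volume, x ∉ Ω → u x = 0) ∧
    (∀ᵐ x ∂volume, ∃ k : ℕ, u x = k) ∧ (∫ x in Ω, u x) = m

/-- `u` is a minimizer of problem (1). -/
def IsMinimizer {n : ℕ} (φ : (Fin n → ℝ) → ℝ) (Ω : Set (Fin n → ℝ)) (m : ℝ)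
    (u : (Fin n → ℝ) → ℝ) : Prop :=
  Admissible φ Ω m u ∧ ∀ v, Admissible φ Ω m v → anisoTV φ u ≤ anisoTV φ v

/-- The anisotropic perimeter `P_φ(E)` of a set `E ⊆ ℝⁿ`. -/
def anisoPerimeter {n : ℕ} (φ : (Fin n → ℝ) → ℝ) (E : Set (Fin n → ℝ)) : ℝ≥0∞ :=
  anisoTV φ (E.indicator (1 : (Fin n → ℝ) → ℝ))

/-- The Wulff ball `W_r(x) = {y : φ(y-x) < r}`. -/
def wulffBall {n : ℕ} (φ : (Fin n → ℝ) → ℝ) (x : Fin n → ℝ) (r : ℝ) : Set (Fin n → ℝ) :=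
  {y | φ (y - x) < r}

/-- `E` satisfies the `rW_φ`-condition. -/
def rWCond {n : ℕ} (φ : (Fin n → ℝ) → ℝ) (E : Set (Fin n → ℝ)) (r : ℝ) : Prop :=
  ∀ x ∈ frontier E, ∃ y, wulffBall φ y r ⊆ E ∧ x ∈ frontier (wulffBall φ y r)

/-- The Wulff plaquette `E^r`, the union of all Wulff balls of radius `r` contained
in `E` (with `E^0 = E`). -/
def plaquette {n : ℕ} (φ : (Fin n → ℝ) → ℝ) (E : Set (Fin n → ℝ)) (r : ℝ) :
    Set (Fin n → ℝ) :=
  if r = 0 then E else ⋃ (x) (_ : wulffBall φ x r ⊆ E), wulffBall φ x r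

/-- `R_Ω`: the maximal `R > 0` such that some Wulff ball of radius `R` is contained in `Ω`. -/
def maxInradius {n : ℕ} (φ : (Fin n → ℝ) → ℝ) (Ω : Set (Fin n → ℝ)) : ℝ :=
  sSup {R | 0 < R ∧ ∃ x, wulffBall φ x R ⊆ Ω}

/-- `r_Ω`: the maximal `r > 0` such that `Ω` satisfies the `rW_φ`-condition
(`0` if there is none, since `sSup ∅ = 0`). -/
def maxRollRadius {n : ℕ} (φ : (Fin n → ℝ) → ℝ) (Ω : Set (Fin n → ℝ)) : ℝ :=
  sSup {r | 0 < r ∧ rWCond φ Ω r}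

/-- The set of points of Lebesgue density `1` of `E`. -/
def densityPoints {n : ℕ} (E : Set (Fin n → ℝ)) : Set (Fin n → ℝ) :=
  {x | Tendsto (fun r : ℝ => volume (E ∩ Metric.ball x r) / volume (Metric.ball x r))
    (nhdsWithin 0 (Ioi 0)) (nhds 1)}

/-- `E` is a minimizer of problem (10): the constrained isoperimetric problem
minimizing `P_φ` among measurable subsets of `Ω` of prescribed measure `m`. -/
def IsIsopMinimizer {n : ℕ} (φ : (Fin n → ℝ) → ℝ) (Ω : Set (Fin n → ℝ)) (m : ℝ)
    (E : Set (Fin n → ℝ)) : Prop :=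
  MeasurableSet E ∧ E ⊆ Ω ∧ (volume E).toReal = m ∧
    ∀ F, MeasurableSet F → F ⊆ Ω → (volume F).toReal = m →
      anisoPerimeter φ E ≤ anisoPerimeter φ F

/-- The Euclidean norm on `ℝ²`. -/
def euclNorm (v : Fin 2 → ℝ) : ℝ := Real.sqrt (v 0 ^ 2 + v 1 ^ 2)

/-- The crystalline norm `φ(ν) = |ν₁| + |ν₂|` on `ℝ²`. -/
def crysNorm (v : Fin 2 → ℝ) : ℝ := |v 0| + |v 1|

/-- The open unit square `(0,1)² ⊆ ℝ²`. -/
def unitSquare : Set (Fin 2 → ℝ) := univ.pi fun _ => Ioo (0 : ℝ) 1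

/-- The closed unit square `[0,1]² ⊆ ℝ²`. -/
def closedUnitSquare : Set (Fin 2 → ℝ) := univ.pi fun _ => Icc (0 : ℝ) 1

/-- `j` is the essential supremum `‖u‖_∞` of `u`. -/
def IsEssSup (u : (Fin 2 → ℝ) → ℝ) (j : ℕ) : Prop :=
  (∀ᵐ x ∂volume, u x ≤ (j : ℝ)) ∧ ∀ c : ℝ, (∀ᵐ x ∂volume, u x ≤ c) → (j : ℝ) ≤ c


/-! The plaquette `T = E^r` is open and convex, being the Minkowski sum of the convex set of
centres of Wulff balls inside `E` with a Wulff ball. If some `x ∈ E` missed `T`, a functional `ℓ`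
would separate `x` strictly from `T`. The `rW_φ`-condition gives `∂E ⊆ closure T`, so `ℓ ≤ ℓ x`
on `∂E`, and hence, along segments issuing from `x`, on the complement of `E`. A point of `E`
either centres a Wulff ball inside `E` or lies within Wulff distance `r` of `∂E`, so `ℓ` is bounded
above on `E` as well. But a nonzero functional is unbounded above. -/
namespace IsNorm

variable {n : ℕ} {φ : (Fin n → ℝ) → ℝ}

def toSeminorm (hφ : IsNorm φ) : Seminorm ℝ (Fin n → ℝ) :=
  Seminorm.of φ hφ.add_le fun a x => by rw [hφ.smul_eq, Real.norm_eq_abs]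

protected theorem continuous (hφ : IsNorm φ) : Continuous φ :=
  hφ.toSeminorm.convexOn.locallyLipschitz.continuous

theorem isOpen_wulffBall (hφ : IsNorm φ) (x : Fin n → ℝ) (r : ℝ) :
    IsOpen (wulffBall φ x r) :=
  isOpen_lt (hφ.continuous.comp (continuous_id.sub continuous_const)) continuous_const

theorem convex_wulffBall (hφ : IsNorm φ) (x : Fin n → ℝ) (r : ℝ) :
    Convex ℝ (wulffBall φ x r) :=
  hφ.toSeminorm.convex_ball x r

theorem mem_wulffBall_self (hφ : IsNorm φ) (x : Fin n → ℝ) {r : ℝ} (hr : 0 < r) :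
    x ∈ wulffBall φ x r :=
  hφ.toSeminorm.mem_ball_self hr

end IsNorm

theorem IsPreconnected.inter_frontier_nonempty {X : Type*} [TopologicalSpace X] {s t : Set X}
    (hs : IsPreconnected s) (hst : (s ∩ t).Nonempty) (hs't : (s \ t).Nonempty) :
    (s ∩ frontier t).Nonempty := by
  by_contra h
  have hsub : s ⊆ interior t ∪ (closure t)ᶜ := fun x hx => by
    by_contra hx'
    simp only [mem_union, mem_compl_iff, not_or, not_not] at hx'
    exact h ⟨x, hx, hx'.2, hx'.1⟩
  have hint : (s ∩ interior t).Nonempty := by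
    obtain ⟨x, hxs, hxt⟩ := hst
    exact ⟨x, hxs, by_contra fun hxi => h ⟨x, hxs, subset_closure hxt, hxi⟩⟩
  have hext : (s ∩ (closure t)ᶜ).Nonempty := by
    obtain ⟨x, hxs, hxt⟩ := hs't
    exact ⟨x, hxs, fun hxc => h ⟨x, hxs, hxc, fun hxi => hxt (interior_subset hxi)⟩⟩
  obtain ⟨x, -, hxi, hxc⟩ :=
    hs _ _ isOpen_interior isClosed_closure.isOpen_compl hsub hint hext
  exact hxc (interior_subset_closure hxi)

theorem exists_mem_segment_mem_frontier {E : Type*} [AddCommGroup E] [Module ℝ E]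
    [TopologicalSpace E] [IsTopologicalAddGroup E] [ContinuousSMul ℝ E] {s : Set E} {a b : E}
    (ha : a ∈ s) (hb : b ∉ s) : ∃ z ∈ segment ℝ a b, z ∈ frontier s :=
  (convex_segment a b).isPreconnected.inter_frontier_nonempty
    ⟨a, left_mem_segment ℝ a b, ha⟩ ⟨b, right_mem_segment ℝ a b, hb⟩

theorem StrongDual.eq_zero_of_forall_le {E : Type*} [TopologicalSpace E] [AddCommGroup E]
    [Module ℝ E] (ℓ : StrongDual ℝ E) {C : ℝ} (hC : ∀ y, ℓ y ≤ C) : ℓ = 0 := by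
  ext v
  by_contra hv
  have := hC (((|C| + 1) / ℓ v) • v)
  rw [map_smul, smul_eq_mul, div_mul_cancel₀ _ hv] at this
  linarith [le_abs_self C]

theorem StrongDual.apply_le_of_notMem {E : Type*} [TopologicalSpace E] [AddCommGroup E]
    [Module ℝ E] [IsTopologicalAddGroup E] [ContinuousSMul ℝ E] (ℓ : StrongDual ℝ E)
    {s : Set E} (hs : IsOpen s) {x : E} (hx : x ∈ s) (hfront : ∀ z ∈ frontier s, ℓ z ≤ ℓ x)
    {p : E} (hp : p ∉ s) : ℓ p ≤ ℓ x := by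
  obtain ⟨z, ⟨a, b, ha, hb, hab, rfl⟩, hz⟩ := exists_mem_segment_mem_frontier hx hp
  have hb0 : b ≠ 0 := by
    rintro rfl
    rw [add_zero] at hab
    rw [hab, one_smul, zero_smul, add_zero, hs.frontier_eq] at hz
    exact hz.2 hx
  have hzx := hfront _ hz
  rw [map_add, map_smul, map_smul, smul_eq_mul, smul_eq_mul] at hzx
  obtain rfl : a = 1 - b := by linarith
  nlinarith [lt_of_le_of_ne hb (Ne.symm hb0)]

section Plaquette

variable {n : ℕ} {φ : (Fin n → ℝ) → ℝ} {E : Set (Fin n → ℝ)} {r : ℝ}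

theorem mem_plaquette (hr : r ≠ 0) {y : Fin n → ℝ} :
    y ∈ plaquette φ E r ↔ ∃ x, wulffBall φ x r ⊆ E ∧ y ∈ wulffBall φ x r := by
  simp [plaquette, hr]

theorem plaquette_subset (hr : r ≠ 0) : plaquette φ E r ⊆ E := fun _ hy => by
  obtain ⟨x, hxE, hyx⟩ := (mem_plaquette hr).1 hy
  exact hxE hyx

theorem wulffBall_subset_plaquette (hr : r ≠ 0) {x : Fin n → ℝ} (hx : wulffBall φ x r ⊆ E) :
    wulffBall φ x r ⊆ plaquette φ E r := fun _ hy => (mem_plaquette hr).2 ⟨x, hx, hy⟩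

theorem IsNorm.isOpen_plaquette (hφ : IsNorm φ) (hr : r ≠ 0) : IsOpen (plaquette φ E r) := by
  simp only [plaquette, hr, if_false]
  exact isOpen_biUnion fun x _ => hφ.isOpen_wulffBall x r

theorem convex_setOf_wulffBall_subset (hE : Convex ℝ E) :
    Convex ℝ {x | wulffBall φ x r ⊆ E} := by
  intro w₁ hw₁ w₂ hw₂ a b ha hb hab q hq
  obtain rfl : b = 1 - a := by linarith
  set c := a • w₁ + (1 - a) • w₂
  have hq' : q = a • (q - c + w₁) + (1 - a) • (q - c + w₂) := by simp only [c]; module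
  rw [hq']
  refine hE (hw₁ ?_) (hw₂ ?_) ha hb hab <;> simpa [wulffBall] using hq

theorem IsNorm.convex_plaquette (hφ : IsNorm φ) (hE : Convex ℝ E) (hr : r ≠ 0) :
    Convex ℝ (plaquette φ E r) := by
  intro p₁ hp₁ p₂ hp₂ a b ha hb hab
  obtain ⟨w₁, hw₁, hpw₁⟩ := (mem_plaquette hr).1 hp₁
  obtain ⟨w₂, hw₂, hpw₂⟩ := (mem_plaquette hr).1 hp₂
  refine (mem_plaquette hr).2
    ⟨a • w₁ + b • w₂, convex_setOf_wulffBall_subset hE hw₁ hw₂ ha hb hab, ?_⟩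
  have hmem : a • (p₁ - w₁) + b • (p₂ - w₂) ∈ wulffBall φ 0 r :=
    hφ.convex_wulffBall 0 r (by simpa [wulffBall] using hpw₁) (by simpa [wulffBall] using hpw₂)
      ha hb hab
  have heq : a • p₁ + b • p₂ - (a • w₁ + b • w₂) = a • (p₁ - w₁) + b • (p₂ - w₂) := by module
  simpa [wulffBall, heq] using hmem

theorem frontier_subset_closure_plaquette (hr : r ≠ 0) (hcond : rWCond φ E r) :
    frontier E ⊆ closure (plaquette φ E r) := fun z hz => by
  obtain ⟨y, hyE, hzy⟩ := hcond z hz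
  exact closure_mono (wulffBall_subset_plaquette hr hyE) (frontier_subset_closure hzy)

theorem IsNorm.forall_le_of_forall_plaquette_le (hφ : IsNorm φ) (hr : 0 < r)
    (ℓ : StrongDual ℝ (Fin n → ℝ)) {c : ℝ} (hℓ : ∀ p ∈ plaquette φ E r, ℓ p ≤ c)
    (hfront : ∀ z ∈ frontier E, ℓ z ≤ c) {w₀ : Fin n → ℝ} (hw₀ : wulffBall φ w₀ r ⊆ E) :
    ∀ y ∈ E, ℓ y ≤ 2 * c - ℓ w₀ := by
  have hcenter {w} (hw : wulffBall φ w r ⊆ E) : ℓ w ≤ c :=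
    hℓ w (wulffBall_subset_plaquette hr.ne' hw (hφ.mem_wulffBall_self w hr))
  have hball (v) (hv : φ v < r) : ℓ v ≤ c - ℓ w₀ := by
    have := hℓ (w₀ + v) (wulffBall_subset_plaquette hr.ne' hw₀ (by simpa [wulffBall] using hv))
    rw [map_add] at this
    linarith
  intro y hy
  by_cases hyE : wulffBall φ y r ⊆ E
  · linarith [hcenter hyE, hcenter hw₀]
  obtain ⟨y', hy'B, hy'E⟩ := not_subset.1 hyE
  obtain ⟨z, hzseg, hz⟩ := exists_mem_segment_mem_frontier hy hy'E
  have hzB : φ (z - y) < r :=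
    (hφ.convex_wulffBall y r).segment_subset (hφ.mem_wulffBall_self y hr) hy'B hzseg
  have hyz := hball (y - z) ((map_sub_rev hφ.toSeminorm y z).trans_lt hzB)
  rw [map_sub] at hyz
  linarith [hfront z hz]

theorem IsNorm.subset_plaquette (hφ : IsNorm φ) (hE : Convex ℝ E) (hEo : IsOpen E)
    (hr : 0 < r) (hcond : rWCond φ E r) : E ⊆ plaquette φ E r := by
  intro x hx
  by_contra hxT
  obtain ⟨ℓ, hℓ⟩ := geometric_hahn_banach_open_point (hφ.convex_plaquette hE hr.ne')
    (hφ.isOpen_plaquette hr.ne') hxT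
  have hℓT : ∀ p ∈ plaquette φ E r, ℓ p ≤ ℓ x := fun p hp => (hℓ p hp).le
  have hfront : ∀ z ∈ frontier E, ℓ z ≤ ℓ x := fun z hz =>
    closure_minimal hℓT (isClosed_le ℓ.continuous continuous_const)
      (frontier_subset_closure_plaquette hr.ne' hcond hz)
  obtain ⟨z₀, hz₀⟩ : (frontier E).Nonempty := nonempty_frontier_iff.2 ⟨⟨x, hx⟩, fun hEu =>
    hxT (wulffBall_subset_plaquette hr.ne' (hEu ▸ subset_univ _) (hφ.mem_wulffBall_self x hr))⟩
  obtain ⟨w₀, hw₀, -⟩ := hcond z₀ hz₀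
  have hbound := hφ.forall_le_of_forall_plaquette_le hr ℓ hℓT hfront hw₀
  have hℓ0 : ℓ = 0 := ℓ.eq_zero_of_forall_le (C := max (2 * ℓ x - ℓ w₀) (ℓ x)) fun y => by
    by_cases hy : y ∈ E
    · exact le_max_of_le_left (hbound y hy)
    · exact le_max_of_le_right (ℓ.apply_le_of_notMem hEo hx hfront hy)
  have := hℓ w₀ (wulffBall_subset_plaquette hr.ne' hw₀ (hφ.mem_wulffBall_self w₀ hr))
  simp [hℓ0] at this

end Plaquette

/-- A convex open set `E ⊆ ℝ²` satisfying the `rW_φ`-condition for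
some `r > 0` coincides with its Wulff plaquette `E^r`. -/
theorem convex_open_eq_plaquette (φ : (Fin 2 → ℝ) → ℝ) (hφ : IsNorm φ)
    (E : Set (Fin 2 → ℝ)) (hEconv : Convex ℝ E) (hEopen : IsOpen E)
    (r : ℝ) (hr : 0 < r) (hcond : rWCond φ E r) :
    E = plaquette φ E r :=
  (hφ.subset_plaquette hEconv hEopen hr hcond).antisymm (plaquette_subset hr.ne')
end
end

section
/- Convexity is essential in the statement that a set satisfying the rW-condition equals its Wulff plaquette: let A, B, C ∈ ℝ² be the vertices of an equilateral triangle with side length 1, and (with the Euclidean norm on ℝ²) let E = B_{1/2}(A) ∪ B_{1/2}(B) ∪ B_{1/2}(C) ∪ T, where B_{1/2}(·) denotes open Euclidean balls of radius 1/2 and T is the (closed) triangle with vertices A, B, C. Then E satisfies the (1/2)W-condition with respect to the Euclidean norm, but E^{1/2} = B_{1/2}(A) ∪ B_{1/2}(B) ∪ B_{1/2}(C) ≠ E. -/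
open MeasureTheory Set ENNReal Filter

noncomputable section

/-! A ball of radius `1/2` inside `E` cannot be centred off the vertices. If its centre `y` lies in
one of the vertex balls but outside the triangle, push `y` radially away from that vertex to the
circle of radius `1/2`: the point reached is within `1/2` of `y` and outside `E`, because the
triangle is convex and the other vertices are at distance `1`. If `y` lies in the triangle but is
not a vertex, one of the angles under which `y` sees the sides is obtuse, so by Thales `y` is
closer than `1/2` to the midpoint of that side; but points just outside that midpoint are not in
`E`. On the other hand every boundary point of `E` lies on one of the three vertex circles, since
the sides of the triangle are covered by the closed vertex balls and the rest of the triangle is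
interior. Finally, the midpoint of a side lies in `E` but in none of the open vertex balls. -/

open Metric Module Topology
open scoped RealInnerProductSpace

section NormedSpace

variable {V : Type*} [NormedAddCommGroup V] [NormedSpace ℝ V]

def hullWithBalls (S : Set V) (r : ℝ) : Set V := (⋃ p ∈ S, ball p r) ∪ convexHull ℝ S

def InteriorBallCondition (F : Set V) (r : ℝ) : Prop :=
  ∀ x ∈ frontier F, ∃ y, ball y r ⊆ F ∧ x ∈ sphere y r

/-- The morphological opening of `F` by a ball of radius `r`: the Euclidean plaquette `F^r`. -/
def ballOpening (F : Set V) (r : ℝ) : Set V := ⋃ (y) (_ : ball y r ⊆ F), ball y r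

lemma ball_subset_hullWithBalls {S : Set V} {p : V} (hp : p ∈ S) (r : ℝ) :
    ball p r ⊆ hullWithBalls S r :=
  (subset_biUnion_of_mem (u := fun p => ball p r) hp).trans subset_union_left

lemma dist_le_or_dist_le_of_mem_segment {P Q x : V} {r : ℝ} (hx : x ∈ segment ℝ P Q)
    (hPQ : dist P Q ≤ 2 * r) : dist x P ≤ r ∨ dist x Q ≤ r := by
  have := dist_add_dist_of_mem_segment hx
  rw [dist_comm P x] at this
  by_contra! h
  linarith [h.1, h.2]

lemma affineIndependent_of_dist_eq {A B C : V} {s : ℝ} (hs : s ≠ 0) (hAB : dist A B = s)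
    (hBC : dist B C = s) (hCA : dist C A = s) : AffineIndependent ℝ ![A, B, C] := by
  rw [affineIndependent_iff_not_collinear_set]
  intro h
  rcases h.wbtw_or_wbtw_or_wbtw with h | h | h <;>
    exact hs (by linarith [h.dist_add_dist, dist_comm A B, dist_comm B C, dist_comm C A])

lemma frontier_convexHull_triple_subset [FiniteDimensional ℝ V] (hV : finrank ℝ V = 2)
    {A B C : V} {r : ℝ} (hind : AffineIndependent ℝ ![A, B, C]) (hAB : dist A B ≤ 2 * r)
    (hBC : dist B C ≤ 2 * r) (hCA : dist C A ≤ 2 * r) :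
    frontier (convexHull ℝ {A, B, C}) ⊆ ⋃ p ∈ ({A, B, C} : Set V), closedBall p r := by
  obtain ⟨b, hb⟩ : ∃ b : AffineBasis (Fin 3) ℝ V, ⇑b = ![A, B, C] :=
    ⟨⟨_, hind, by rw [hind.affineSpan_eq_top_iff_card_eq_finrank_add_one, hV]; rfl⟩, rfl⟩
  have hrange : range b = {A, B, C} := by
    rw [hb, Matrix.range_cons, Matrix.range_cons_cons_empty, singleton_union]
  have hT : IsClosed (convexHull ℝ {A, B, C}) := ((toFinite _).isCompact_convexHull ℝ).isClosed
  intro x hx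
  rw [frontier, hT.closure_eq, ← hrange, b.interior_convexHull, b.convexHull_eq_nonneg_coord] at hx
  obtain ⟨hnonneg, hpos⟩ := hx
  obtain ⟨i, hi⟩ := not_forall.1 hpos
  replace hi : b.coord i x = 0 := le_antisymm (not_lt.1 hi) (hnonneg i)
  have hsum : b.coord 0 x + b.coord 1 x + b.coord 2 x = 1 := by
    simpa only [Fin.sum_univ_three] using b.sum_coord_apply_eq_one x
  have hx : b.coord 0 x • A + b.coord 1 x • B + b.coord 2 x • C = x := by
    simpa [Fin.sum_univ_three, hb] using b.linear_combination_coord_eq_self x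
  simp only [mem_insert_iff, mem_singleton_iff, iUnion_iUnion_eq_or_left, iUnion_iUnion_eq_left,
    mem_union, mem_closedBall]
  fin_cases i <;> simp only [Fin.zero_eta, Fin.mk_one, Fin.reduceFinMk] at hi <;>
    simp only [hi, zero_smul, zero_add, add_zero] at hsum hx
  · rcases dist_le_or_dist_le_of_mem_segment ⟨_, _, hnonneg 1, hnonneg 2, hsum, hx⟩ hBC with h | h <;>
      simp only [h, true_or, or_true]
  · rcases dist_le_or_dist_le_of_mem_segment ⟨_, _, hnonneg 2, hnonneg 0, by linarith,
      (add_comm _ _).trans hx⟩ hCA with h | h <;> simp only [h, true_or, or_true]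
  · rcases dist_le_or_dist_le_of_mem_segment ⟨_, _, hnonneg 0, hnonneg 1, hsum, hx⟩ hAB with h | h <;>
      simp only [h, true_or, or_true]

lemma interiorBallCondition_hullWithBalls {S : Set V} (hS : S.Finite) {r : ℝ} (hr : r ≠ 0)
    (hT : frontier (convexHull ℝ S) ⊆ ⋃ p ∈ S, closedBall p r) :
    InteriorBallCondition (hullWithBalls S r) r := by
  intro x hx
  have hcl : x ∈ ⋃ p ∈ S, closedBall p r := by
    have := hx.1
    rw [hullWithBalls, closure_union, hS.closure_biUnion] at this
    simp only [closure_ball _ hr] at this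
    exact this.elim id fun h => hT ⟨h, fun hi => hx.2 (interior_mono subset_union_right hi)⟩
  obtain ⟨p, hp, hxp⟩ := mem_iUnion₂.1 hcl
  have hxp' : ¬ dist x p < r := fun hlt =>
    hx.2 (interior_maximal (ball_subset_hullWithBalls hp r) isOpen_ball hlt)
  exact ⟨p, ball_subset_hullWithBalls hp r, le_antisymm hxp (not_lt.1 hxp')⟩

lemma mem_convexHull_of_ball_subset_hullWithBalls {S : Set V} {r : ℝ}
    (hS : S.Pairwise fun p q => 2 * r ≤ dist p q) {p y : V} (hp : p ∈ S) (hy : y ∈ ball p r)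
    (hsub : ball y r ⊆ hullWithBalls S r) : y ∈ convexHull ℝ S := by
  by_contra hyT
  have hd : 0 < dist y p := dist_pos.2 fun h => hyT (h ▸ subset_convexHull ℝ S hp)
  have hdr : dist y p < r := hy
  have hr : 0 < r := hd.trans hdr
  set q := p + (r / dist y p) • (y - p) with hq_def
  have hqp : dist q p = r := by
    rw [dist_eq_norm, hq_def, add_sub_cancel_left, norm_smul, ← dist_eq_norm,
      Real.norm_of_nonneg (by positivity), div_mul_cancel₀ _ hd.ne']
  have hqy : q ∈ ball y r := by
    have : q - y = (r / dist y p - 1) • (y - p) := by rw [hq_def]; module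
    have h1 : 1 ≤ r / dist y p := by rw [le_div_iff₀ hd]; linarith
    rw [mem_ball, dist_eq_norm, this, norm_smul, Real.norm_of_nonneg (by linarith), ← dist_eq_norm,
      sub_mul, div_mul_cancel₀ _ hd.ne']
    linarith
  have hyq : y ∈ segment ℝ p q := by
    refine ⟨1 - dist y p / r, dist y p / r, by rw [sub_nonneg, div_le_one hr]; linarith,
      by positivity, by ring, ?_⟩
    rw [hq_def, smul_add, smul_smul, div_mul_div_cancel₀ hr.ne', div_self hd.ne']
    module
  refine (hsub hqy).elim (fun hq => ?_) fun hq =>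
    hyT ((convex_convexHull ℝ S).segment_subset (subset_convexHull ℝ S hp) hq hyq)
  obtain ⟨p', hp', hqp'⟩ := mem_iUnion₂.1 hq
  rcases eq_or_ne p p' with rfl | hne
  · exact (mem_ball.1 hqp').ne hqp
  · linarith [hS hp hp' hne, mem_ball.1 hqp', dist_triangle_left p p' q]

lemma biUnion_ball_ne_hullWithBalls {A B C : V} {r : ℝ} (hAB : dist A B = 2 * r)
    (hCA : 2 * r ≤ dist C A) :
    ⋃ p ∈ ({A, B, C} : Set V), ball p r ≠ hullWithBalls {A, B, C} r := by
  intro h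
  have hM : midpoint ℝ A B ∈ hullWithBalls {A, B, C} r :=
    subset_union_right (segment_subset_convexHull (by simp) (by simp) (midpoint_mem_segment A B))
  have hMA : dist (midpoint ℝ A B) A = r := by rw [dist_midpoint_left, hAB]; norm_num; ring
  have hMB : dist (midpoint ℝ A B) B = r := by rw [dist_midpoint_right, hAB]; norm_num; ring
  rw [← h] at hM
  simp only [mem_insert_iff, mem_singleton_iff, iUnion_iUnion_eq_or_left, iUnion_iUnion_eq_left,
    mem_union, mem_ball] at hM
  rcases hM with h | h | h
  · exact h.ne hMA
  · exact h.ne hMB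
  · linarith [dist_triangle_left C A (midpoint ℝ A B)]

end NormedSpace

lemma exists_eq_add_smul_of_mem_convexHull_triple {V : Type*} [AddCommGroup V] [Module ℝ V]
    {A B C y : V} (hy : y ∈ convexHull ℝ {A, B, C}) :
    ∃ b c : ℝ, 0 ≤ b ∧ 0 ≤ c ∧ b + c ≤ 1 ∧ y = A + b • (B - A) + c • (C - A) := by
  rw [convexHull_insert (insert_nonempty B {C}), convexHull_pair, mem_convexJoin] at hy
  obtain ⟨A', rfl, z, ⟨β, γ, hβ, hγ, hβγ, rfl⟩, α, θ, hα, hθ, hαθ, rfl⟩ := hy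
  refine ⟨θ * β, θ * γ, by positivity, by positivity, by nlinarith, ?_⟩
  rw [eq_sub_of_add_eq hαθ, eq_sub_of_add_eq hβγ]
  module

section InnerProductSpace

variable {V : Type*} [NormedAddCommGroup V] [InnerProductSpace ℝ V]

lemma norm_le_norm_add_smul_of_inner_eq_zero {w n : V} (h : ⟪w, n⟫ = 0) (ε : ℝ) :
    ‖w‖ ≤ ‖w + ε • n‖ := by
  have := norm_add_sq_eq_norm_sq_add_norm_sq_real (x := w) (y := ε • n)
    (by rw [inner_smul_right, h, mul_zero])
  nlinarith [norm_nonneg w, norm_nonneg (w + ε • n), sq_nonneg ‖ε • n‖]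

lemma norm_smul_add_smul_sq {u v : V} {s : ℝ} (hu : ‖u‖ = s) (hv : ‖v‖ = s)
    (huv : ⟪u, v⟫ = s ^ 2 / 2) (α β : ℝ) :
    ‖α • u + β • v‖ ^ 2 = s ^ 2 * (α ^ 2 + α * β + β ^ 2) := by
  rw [norm_add_sq_real, norm_smul, norm_smul, real_inner_smul_left, real_inner_smul_right, huv,
    hu, hv, mul_pow, mul_pow, Real.norm_eq_abs, Real.norm_eq_abs, sq_abs, sq_abs]
  ring

lemma inner_midpoint_sub_left_midpoint_sub_eq_zero {P Q R : V} (h : dist P R = dist Q R) :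
    ⟪midpoint ℝ P Q - P, midpoint ℝ P Q - R⟫ = 0 := by
  rw [show midpoint ℝ P Q - P = (1 / 2 : ℝ) • (Q - P) by simp, real_inner_smul_left,
    real_inner_comm]
  exact mul_eq_zero_of_right _ <| EuclideanGeometry.inner_vsub_vsub_of_dist_eq_of_dist_eq h
    (dist_left_midpoint_eq_dist_right_midpoint P Q)

lemma midpoint_add_smul_notMem_hullWithBalls {P Q R : V} {r ε : ℝ} (hr : 0 < r) (hε : 0 < ε)
    (hPQ : dist P Q = 2 * r) (hPR : dist P R = 2 * r) (hQR : dist Q R = 2 * r) :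
    midpoint ℝ P Q + ε • (midpoint ℝ P Q - R) ∉ hullWithBalls {P, Q, R} r := by
  have hMP_orth := inner_midpoint_sub_left_midpoint_sub_eq_zero (hPR.trans hQR.symm)
  have hMQ_orth := inner_midpoint_sub_left_midpoint_sub_eq_zero (hQR.trans hPR.symm)
  rw [midpoint_comm Q P] at hMQ_orth
  set M := midpoint ℝ P Q
  set n := M - R
  have hMP : dist M P = r := by rw [dist_midpoint_left, hPQ]; norm_num; ring
  have hMQ : dist M Q = r := by rw [dist_midpoint_right, hPQ]; norm_num; ring
  have hn : r ≤ ‖n‖ := by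
    have := dist_triangle P M R
    rw [dist_comm P M, hMP, hPR] at this
    rw [← dist_eq_norm]; linarith
  rintro (hball | hT)
  · simp only [mem_insert_iff, mem_singleton_iff, iUnion_iUnion_eq_or_left,
      iUnion_iUnion_eq_left, mem_union, mem_ball, dist_eq_norm] at hball
    rcases hball with h | h | h
    · have := norm_le_norm_add_smul_of_inner_eq_zero hMP_orth ε
      rw [sub_add_eq_add_sub, ← dist_eq_norm M, hMP] at this
      linarith
    · have := norm_le_norm_add_smul_of_inner_eq_zero hMQ_orth ε
      rw [sub_add_eq_add_sub, ← dist_eq_norm M, hMQ] at this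
      linarith
    · rw [show M + ε • n - R = (1 + ε) • n by simp only [n]; module, norm_smul,
        Real.norm_of_nonneg (by linarith)] at h
      nlinarith
  · have hH : convexHull ℝ {P, Q, R} ⊆ {x | ⟪x, n⟫ ≤ ⟪M, n⟫} := by
      refine convexHull_min ?_ (convex_halfSpace_le
        (isBoundedBilinearMap_inner.isBoundedLinearMap_left n).toIsLinearMap _)
      have hR : ⟪M - R, n⟫ = ‖n‖ ^ 2 := real_inner_self_eq_norm_sq n
      rw [inner_sub_left] at hMP_orth hMQ_orth hR
      simp only [insert_subset_iff, singleton_subset_iff, mem_ofPred_eq]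
      refine ⟨?_, ?_, ?_⟩ <;> nlinarith [sq_nonneg ‖n‖]
    have := hH hT
    simp only [mem_ofPred_eq, inner_add_left, real_inner_smul_left,
      real_inner_self_eq_norm_sq] at this
    nlinarith [mul_pos hε (pow_pos (hr.trans_le hn) 2)]

lemma le_dist_midpoint_of_ball_subset {P Q R y : V} {r : ℝ} (hr : 0 < r)
    (hPQ : dist P Q = 2 * r) (hPR : dist P R = 2 * r) (hQR : dist Q R = 2 * r)
    (hsub : ball y r ⊆ hullWithBalls {P, Q, R} r) : r ≤ dist y (midpoint ℝ P Q) := by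
  set M := midpoint ℝ P Q
  by_contra! hlt
  have hlim : Tendsto (fun ε : ℝ => M + ε • (M - R)) (𝓝[>] 0) (𝓝 M) :=
    ((continuous_const.add (continuous_id.smul continuous_const)).tendsto' 0 M
      (by simp [M])).mono_left nhdsWithin_le_nhds
  obtain ⟨ε, hεy, hε⟩ := ((hlim.eventually (isOpen_ball.mem_nhds (mem_ball'.2 hlt))).and
    self_mem_nhdsWithin).exists
  exact midpoint_add_smul_notMem_hullWithBalls hr hε hPQ hPR hQR (hsub hεy)

lemma eq_vertex_of_le_dist_midpoint {A B C y : V} {r : ℝ} (hr : 0 < r)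
    (hAB : dist A B = 2 * r) (hBC : dist B C = 2 * r) (hCA : dist C A = 2 * r)
    (hy : y ∈ convexHull ℝ {A, B, C}) (h₁ : r ≤ dist y (midpoint ℝ A B))
    (h₂ : r ≤ dist y (midpoint ℝ B C)) (h₃ : r ≤ dist y (midpoint ℝ C A)) :
    y = A ∨ y = B ∨ y = C := by
  obtain ⟨b, c, hb, hc, hbc, rfl⟩ := exists_eq_add_smul_of_mem_convexHull_triple hy
  have hu : ‖B - A‖ = 2 * r := by rw [← dist_eq_norm, dist_comm, hAB]
  have hv : ‖C - A‖ = 2 * r := by rw [← dist_eq_norm, hCA]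
  have huv : ⟪B - A, C - A⟫ = (2 * r) ^ 2 / 2 := by
    have := norm_sub_sq_real (B - A) (C - A)
    rw [sub_sub_sub_cancel_right, ← dist_eq_norm, hBC, hu, hv] at this
    linarith
  have hsq : ∀ (M : V) (α β : ℝ), A + b • (B - A) + c • (C - A) - M = α • (B - A) + β • (C - A) →
      r ≤ dist (A + b • (B - A) + c • (C - A)) M → 1 / 4 ≤ α ^ 2 + α * β + β ^ 2 := by
    intro M α β hM hle
    have := pow_le_pow_left₀ hr.le hle 2
    rw [dist_eq_norm, hM, norm_smul_add_smul_sq hu hv huv] at this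
    nlinarith [mul_pos hr hr]
  have e₁ := hsq _ (b - 1 / 2) c (by rw [midpoint_eq_smul_add, invOf_eq_inv]; module) h₁
  have e₂ := hsq _ (b - 1 / 2) (c - 1 / 2) (by rw [midpoint_eq_smul_add, invOf_eq_inv]; module) h₂
  have e₃ := hsq _ b (c - 1 / 2) (by rw [midpoint_eq_smul_add, invOf_eq_inv]; module) h₃
  -- With barycentric coordinates `(1 - b - c, b, c)`, the three inequalities force any two of them
  -- to have product zero.
  have hbc0 : b * c = 0 := by
    nlinarith [mul_nonneg hb hc, mul_nonneg (mul_nonneg hb hc) (sub_nonneg.2 hbc)]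
  have hb0 : b * (1 - b - c) = 0 := by
    nlinarith [mul_nonneg hb hc, mul_nonneg hb (sub_nonneg.2 hbc)]
  have hc0 : c * (1 - b - c) = 0 := by nlinarith [mul_nonneg hc (sub_nonneg.2 hbc)]
  rcases mul_eq_zero.1 hbc0 with rfl | rfl
  · rcases mul_eq_zero.1 hc0 with rfl | hc1
    · simp
    · rw [show c = 1 by linarith]; simp
  · rcases mul_eq_zero.1 hb0 with rfl | hb1
    · simp
    · rw [show b = 1 by linarith]; simp

lemma mem_of_ball_subset_hullWithBalls {A B C y : V} {r : ℝ} (hr : 0 < r)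
    (hAB : dist A B = 2 * r) (hBC : dist B C = 2 * r) (hCA : dist C A = 2 * r)
    (h : ball y r ⊆ hullWithBalls {A, B, C} r) : y ∈ ({A, B, C} : Set V) := by
  have hsep : ({A, B, C} : Set V).Pairwise fun p q => 2 * r ≤ dist p q := by
    rintro p (rfl | rfl | rfl) q (rfl | rfl | rfl) hne <;>
      first | exact absurd rfl hne | linarith [dist_comm p q]
  have hyT : y ∈ convexHull ℝ {A, B, C} := by
    rcases h (mem_ball_self hr) with hy | hy
    · obtain ⟨p, hp, hyp⟩ := mem_iUnion₂.1 hy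
      exact mem_convexHull_of_ball_subset_hullWithBalls hsep hp hyp h
    · exact hy
  have hBCA : ({A, B, C} : Set V) = {B, C, A} := by ext; simp only [mem_insert_iff, mem_singleton_iff]; tauto
  have hCAB : ({A, B, C} : Set V) = {C, A, B} := by ext; simp only [mem_insert_iff, mem_singleton_iff]; tauto
  exact eq_vertex_of_le_dist_midpoint hr hAB hBC hCA hyT
    (le_dist_midpoint_of_ball_subset hr hAB (by rw [dist_comm, hCA]) hBC h)
    (le_dist_midpoint_of_ball_subset hr hBC (by rw [dist_comm, hAB]) hCA (hBCA ▸ h))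
    (le_dist_midpoint_of_ball_subset hr hCA (by rw [dist_comm, hBC]) hAB (hCAB ▸ h))

lemma ballOpening_hullWithBalls {A B C : V} {r : ℝ} (hr : 0 < r)
    (hAB : dist A B = 2 * r) (hBC : dist B C = 2 * r) (hCA : dist C A = 2 * r) :
    ballOpening (hullWithBalls {A, B, C} r) r = ⋃ p ∈ ({A, B, C} : Set V), ball p r :=
  subset_antisymm
    (iUnion₂_subset fun _ hy => subset_biUnion_of_mem (u := fun p => ball p r)
      (mem_of_ball_subset_hullWithBalls hr hAB hBC hCA hy))
    (iUnion₂_subset fun p hp => subset_iUnion₂_of_subset p (ball_subset_hullWithBalls hp r) le_rfl)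

lemma interiorBallCondition_hullWithBalls_triangle [FiniteDimensional ℝ V]
    (hV : finrank ℝ V = 2) {A B C : V} {r : ℝ} (hr : 0 < r)
    (hAB : dist A B = 2 * r) (hBC : dist B C = 2 * r) (hCA : dist C A = 2 * r) :
    InteriorBallCondition (hullWithBalls {A, B, C} r) r :=
  interiorBallCondition_hullWithBalls (toFinite _) hr.ne' <|
    frontier_convexHull_triple_subset hV
      (affineIndependent_of_dist_eq (mul_pos two_pos hr).ne' hAB hBC hCA) hAB.le hBC.le hCA.le

end InnerProductSpace

section EuclideanPlane

abbrev toEuclideanPlane : (Fin 2 → ℝ) ≃L[ℝ] EuclideanSpace ℝ (Fin 2) :=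
  (EuclideanSpace.equiv (Fin 2) ℝ).symm

lemma euclNorm_eq_norm (v : Fin 2 → ℝ) : euclNorm v = ‖toEuclideanPlane v‖ := by
  rw [EuclideanSpace.norm_eq]
  simp [euclNorm, Fin.sum_univ_two]

lemma wulffBall_euclNorm (x : Fin 2 → ℝ) (r : ℝ) :
    wulffBall euclNorm x r = toEuclideanPlane ⁻¹' ball (toEuclideanPlane x) r := by
  ext y
  simp [wulffBall, euclNorm_eq_norm, dist_eq_norm]

lemma preimage_biUnion_ball (S : Set (Fin 2 → ℝ)) (r : ℝ) :
    toEuclideanPlane ⁻¹' ⋃ p ∈ toEuclideanPlane '' S, ball p r =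
      ⋃ p ∈ S, wulffBall euclNorm p r := by
  simp only [preimage_iUnion₂, biUnion_image, wulffBall_euclNorm]

lemma preimage_hullWithBalls (S : Set (Fin 2 → ℝ)) (r : ℝ) :
    toEuclideanPlane ⁻¹' hullWithBalls (toEuclideanPlane '' S) r =
      (⋃ p ∈ S, wulffBall euclNorm p r) ∪ convexHull ℝ S := by
  rw [hullWithBalls, preimage_union, preimage_biUnion_ball,
    ← toEuclideanPlane.image_symm_eq_preimage]
  congr 1
  exact (toEuclideanPlane.symm.toLinearMap.image_convexHull _).trans
    (congrArg _ (toEuclideanPlane.symm_image_image S))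

lemma frontier_preimage_toEuclideanPlane (s : Set (EuclideanSpace ℝ (Fin 2))) :
    frontier (toEuclideanPlane ⁻¹' s) = toEuclideanPlane ⁻¹' frontier s :=
  (toEuclideanPlane.toHomeomorph.preimage_frontier s).symm

lemma rWCond_euclNorm_preimage {F : Set (EuclideanSpace ℝ (Fin 2))} {r : ℝ} (hr : r ≠ 0)
    (h : InteriorBallCondition F r) : rWCond euclNorm (toEuclideanPlane ⁻¹' F) r := by
  intro x hx
  rw [frontier_preimage_toEuclideanPlane] at hx
  obtain ⟨y, hyF, hxy⟩ := h _ hx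
  refine ⟨toEuclideanPlane.symm y, ?_, ?_⟩ <;>
    rw [wulffBall_euclNorm, ContinuousLinearEquiv.apply_symm_apply]
  · exact preimage_mono hyF
  · rwa [frontier_preimage_toEuclideanPlane, frontier_ball y hr]

lemma plaquette_euclNorm_preimage (F : Set (EuclideanSpace ℝ (Fin 2))) {r : ℝ} (hr : r ≠ 0) :
    plaquette euclNorm (toEuclideanPlane ⁻¹' F) r = toEuclideanPlane ⁻¹' ballOpening F r := by
  rw [plaquette, if_neg hr, ballOpening, preimage_iUnion₂]
  simp only [wulffBall_euclNorm, toEuclideanPlane.surjective.preimage_subset_preimage_iff]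
  exact toEuclideanPlane.surjective.iUnion_comp fun y => ⋃ (_ : ball y r ⊆ F),
    toEuclideanPlane ⁻¹' ball y r

end EuclideanPlane

/-- Convexity is essential in Statement 4: for the union `E` of the
three open balls of radius `1/2` centered at the vertices `A, B, C` of an equilateral
triangle of side length `1` together with the closed triangle, `E` satisfies the
`(1/2)W`-condition for the Euclidean norm, yet its plaquette
`E^{1/2} = B_{1/2}(A) ∪ B_{1/2}(B) ∪ B_{1/2}(C)` differs from `E`. -/
theorem plaquette_counterexample (A B C : Fin 2 → ℝ)
    (hAB : euclNorm (A - B) = 1) (hBC : euclNorm (B - C) = 1)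
    (hCA : euclNorm (C - A) = 1)
    (E : Set (Fin 2 → ℝ))
    (hE : E = wulffBall euclNorm A (1 / 2) ∪ wulffBall euclNorm B (1 / 2) ∪
      wulffBall euclNorm C (1 / 2) ∪ convexHull ℝ {A, B, C}) :
    rWCond euclNorm E (1 / 2) ∧
    plaquette euclNorm E (1 / 2) =
      wulffBall euclNorm A (1 / 2) ∪ wulffBall euclNorm B (1 / 2) ∪
        wulffBall euclNorm C (1 / 2) ∧
    plaquette euclNorm E (1 / 2) ≠ E := by
  have hside : ∀ P Q : Fin 2 → ℝ, euclNorm (P - Q) = 1 →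
      dist (toEuclideanPlane P) (toEuclideanPlane Q) = 2 * (1 / 2) := fun P Q h => by
    rw [dist_eq_norm, ← map_sub, ← euclNorm_eq_norm, h]; norm_num
  have hab := hside A B hAB
  have hbc := hside B C hBC
  have hca := hside C A hCA
  have hballs : wulffBall euclNorm A (1 / 2) ∪ wulffBall euclNorm B (1 / 2) ∪
      wulffBall euclNorm C (1 / 2) = toEuclideanPlane ⁻¹' ⋃ p ∈ toEuclideanPlane '' {A, B, C},
        ball p (1 / 2) := by
    rw [preimage_biUnion_ball, biUnion_insert, biUnion_insert, biUnion_singleton, ← union_assoc]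
  have hE' : E = toEuclideanPlane ⁻¹' hullWithBalls (toEuclideanPlane '' {A, B, C}) (1 / 2) := by
    rw [hE, preimage_hullWithBalls, biUnion_insert, biUnion_insert, biUnion_singleton,
      ← union_assoc]
  simp only [image_insert_eq, image_singleton] at hballs hE'
  have hplaq : plaquette euclNorm E (1 / 2) = wulffBall euclNorm A (1 / 2) ∪
      wulffBall euclNorm B (1 / 2) ∪ wulffBall euclNorm C (1 / 2) := by
    rw [hE', plaquette_euclNorm_preimage _ (by norm_num),
      ballOpening_hullWithBalls (by norm_num) hab hbc hca, hballs]
  refine ⟨?_, hplaq, ?_⟩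
  · rw [hE']
    exact rWCond_euclNorm_preimage (by norm_num) <|
      interiorBallCondition_hullWithBalls_triangle finrank_euclideanSpace_fin (by norm_num)
        hab hbc hca
  · rw [hplaq, hballs, hE']
    exact (preimage_injective.2 toEuclideanPlane.surjective).ne
      (biUnion_ball_ne_hullWithBalls hab hca.ge)
end
end
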